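/- arXiv:1911.12945 — 4 statements merged into one kernel-verified Lean document; each statement's English description precedes it below -/
import Mathlib

section
/- For every u ∈ S_s and every v ∈ V_f, one has ‖u − v‖² = ‖u − x̄‖² + ‖x̄ − v‖², where x̄ is the orthogonal projection of x onto V_f. Consequently, x_s (= x̄) is the element of V_f closest to any given element of S_s. -/
/-!
Every `u ∈ S_s` differs from `x` by a vector orthogonal to all `f i`, hence to `V_f`, so `u` and
`x` have the same projection `x̄` onto `V_f`. Since `u - x̄ ⊥ V_f` and `x̄ - v ∈ V_f`, the identity
is Pythagoras for `u - v = (u - x̄) + (x̄ - v)`.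
-/

open scoped RealInnerProductSpace

open Submodule Set

namespace Submodule

variable {E : Type*} [NormedAddCommGroup E] [InnerProductSpace ℝ E]

theorem sub_mem_orthogonal_span_range {ι : Type*} {f : ι → E} {u x : E}
    (h : ∀ i, ⟪f i, u⟫ = ⟪f i, x⟫) : u - x ∈ (span ℝ (range f))ᗮ := by
  rw [← span_singleton_le_iff_mem, ← isOrtho_iff_le, isOrtho_span]
  rintro _ rfl _ ⟨i, rfl⟩
  rw [inner_sub_left, real_inner_comm, h, real_inner_comm, sub_self]

theorem orthogonalProjectionOnto_eq_of_sub_mem_orthogonal (K : Submodule ℝ E)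
    [K.HasOrthogonalProjection] {u x : E} (h : u - x ∈ Kᗮ) :
    K.orthogonalProjectionOnto u = K.orthogonalProjectionOnto x :=
  sub_eq_zero.1 <| by rw [← map_sub]; exact orthogonalProjectionOnto_eq_zero_iff.2 h

theorem norm_sub_sq_eq_norm_sub_orthogonalProjectionOnto_sq_add (K : Submodule ℝ E)
    [K.HasOrthogonalProjection] (u : E) {v : E} (hv : v ∈ K) :
    ‖u - v‖ ^ 2 =
      ‖u - K.orthogonalProjectionOnto u‖ ^ 2 + ‖(K.orthogonalProjectionOnto u : E) - v‖ ^ 2 := by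
  have horth : ⟪u - K.orthogonalProjectionOnto u, (K.orthogonalProjectionOnto u : E) - v⟫ = 0 :=
    inner_left_of_mem_orthogonal (K.sub_mem (coe_mem _) hv) (K.sub_starProjection_mem_orthogonal u)
  rw [← sub_add_sub_cancel u (K.orthogonalProjectionOnto u : E) v, norm_add_sq_real, horth]
  ring

end Submodule

/-- Pythagorean identity: for `u ∈ S_s` and `v ∈ V_f`,
`‖u - v‖² = ‖u - x̄‖² + ‖x̄ - v‖²` where `x̄` is the orthogonal projection of `x` on `V_f`;
consequently `x̄` is the element of `V_f` closest to any given element of `S_s`. -/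
theorem pythagorean_identity_and_closest
    {B : Type*} [NormedAddCommGroup B] [InnerProductSpace ℝ B] [CompleteSpace B]
    {Z : Type*} (f : Z → B) (x : B) (s : Z → ℝ) (hs : ∀ i, s i = ⟪f i, x⟫) :
    (∀ u : B, (∀ i, ⟪f i, u⟫ = s i) →
      ∀ v ∈ (Submodule.span ℝ (Set.range f)).topologicalClosure,
        ‖u - v‖ ^ 2 =
          ‖u - (Submodule.orthogonalProjectionOnto (Submodule.span ℝ (Set.range f)).topologicalClosure x : B)‖ ^ 2
          + ‖(Submodule.orthogonalProjectionOnto (Submodule.span ℝ (Set.range f)).topologicalClosure x : B) - v‖ ^ 2)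
    ∧ (∀ u : B, (∀ i, ⟪f i, u⟫ = s i) →
        ∀ v ∈ (Submodule.span ℝ (Set.range f)).topologicalClosure,
          ‖u - (Submodule.orthogonalProjectionOnto (Submodule.span ℝ (Set.range f)).topologicalClosure x : B)‖
            ≤ ‖u - v‖) := by
  set V := (span ℝ (range f)).topologicalClosure
  have pythagoras : ∀ u : B, (∀ i, ⟪f i, u⟫ = s i) → ∀ v ∈ V,
      ‖u - v‖ ^ 2 = ‖u - V.orthogonalProjectionOnto x‖ ^ 2
        + ‖(V.orthogonalProjectionOnto x : B) - v‖ ^ 2 := by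
    intro u hu v hv
    have hux : u - x ∈ Vᗮ := by
      rw [orthogonal_closure]
      exact sub_mem_orthogonal_span_range fun i => (hu i).trans (hs i)
    rw [← V.orthogonalProjectionOnto_eq_of_sub_mem_orthogonal hux]
    exact V.norm_sub_sq_eq_norm_sub_orthogonalProjectionOnto_sq_add u hv
  refine ⟨pythagoras, fun u hu v hv => ?_⟩
  refine (pow_le_pow_iff_left₀ (norm_nonneg _) (norm_nonneg _) two_ne_zero).1 ?_
  rw [pythagoras u hu v hv]
  exact le_add_of_nonneg_right (sq_nonneg _)
end

section
/- Theorem (strict contraction on V_f): with M^λ u := u − Σ_{i∈Z} λ_i ⟨π_i, u⟩ f_i/‖π_i‖², where f_i = P_B π_i, and λ_i ∈ (0,2) for all i, one has ‖M^λ u‖ < ‖u‖ for every nonzero u ∈ V_f, the closed span of (f_i) in B. -/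
/-!
Write `Q^λ u = u - ∑ i, c i • π i` with `c i = λ i ⟪π i, u⟫ / ‖π i‖²`. By orthogonality of the `π i`,
`‖Q^λ u‖² = ‖u‖² - ∑ i, λ i (2 - λ i) ⟪π i, u⟫² / ‖π i‖²`, and every summand is nonnegative for
`λ i ∈ (0, 2)`. For `u ∈ V_f ⊆ B` we have `M^λ u = P_B (Q^λ u)`, so `‖M^λ u‖ ≤ ‖Q^λ u‖`, and
`⟪π i, u⟫ = ⟪f i, u⟫`; since `u ≠ 0` lies in the span of the `f i`, one of these is nonzero,
which makes the sum positive.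
-/

open scoped RealInnerProductSpace
open Finset

theorem exists_inner_ne_zero_of_mem_span {𝕜 E ι : Type*} [RCLike 𝕜] [NormedAddCommGroup E]
    [InnerProductSpace 𝕜 E] {g : ι → E} {u : E} (hu : u ∈ Submodule.span 𝕜 (Set.range g))
    (hu0 : u ≠ 0) : ∃ i, inner 𝕜 (g i) u ≠ 0 := by
  by_contra! h
  have hle : Submodule.span 𝕜 (Set.range g) ≤ (𝕜 ∙ u)ᗮ :=
    Submodule.span_le.mpr <| Set.range_subset_iff.mpr fun i =>
      Submodule.mem_orthogonal_singleton_iff_inner_left.mpr (h i)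
  exact hu0 <| inner_self_eq_zero.mp <| Submodule.mem_orthogonal_singleton_iff_inner_left.mp (hle hu)

section RelaxedStep

variable {E ι : Type*} [NormedAddCommGroup E] [InnerProductSpace ℝ E] [Fintype ι]

theorem norm_sum_smul_sq_of_pairwise_inner_eq_zero {v : ι → E}
    (hv : Pairwise fun i j => ⟪v i, v j⟫ = 0) (c : ι → ℝ) :
    ‖∑ i, c i • v i‖ ^ 2 = ∑ i, c i ^ 2 * ‖v i‖ ^ 2 := by
  rw [← real_inner_self_eq_norm_sq, sum_inner]
  refine sum_congr rfl fun i _ => ?_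
  rw [real_inner_smul_left, inner_sum, sum_eq_single i]
  · rw [real_inner_smul_right, real_inner_self_eq_norm_sq]; ring
  · intro j _ hji
    rw [real_inner_smul_right, hv hji.symm, mul_zero]
  · simp

theorem norm_sub_sum_smul_sq_of_pairwise_inner_eq_zero {v : ι → E}
    (hv : Pairwise fun i j => ⟪v i, v j⟫ = 0) (c : ι → ℝ) (u : E) :
    ‖u - ∑ i, c i • v i‖ ^ 2 = ‖u‖ ^ 2 - ∑ i, (2 * c i * ⟪v i, u⟫ - c i ^ 2 * ‖v i‖ ^ 2) := by
  rw [norm_sub_sq_real, norm_sum_smul_sq_of_pairwise_inner_eq_zero hv, inner_sum,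
    sum_sub_distrib, mul_sum]
  simp only [real_inner_smul_right, real_inner_comm u, mul_assoc]
  ring

/-- The map `Q^λ`; on `B`, `M^λ = P_B ∘ Q^λ`. -/
noncomputable def relaxedStep (π : ι → E) (l : ι → ℝ) (u : E) : E :=
  u - ∑ i, (l i * ⟪π i, u⟫ / ‖π i‖ ^ 2) • π i

variable {π : ι → E} {l : ι → ℝ}

theorem norm_relaxedStep_sq (hπ : Pairwise fun i j => ⟪π i, π j⟫ = 0) (u : E) :
    ‖relaxedStep π l u‖ ^ 2 = ‖u‖ ^ 2 - ∑ i, l i * (2 - l i) * ⟪π i, u⟫ ^ 2 / ‖π i‖ ^ 2 := by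
  rw [relaxedStep, norm_sub_sum_smul_sq_of_pairwise_inner_eq_zero hπ]
  congr 1
  refine sum_congr rfl fun i _ => ?_
  rcases eq_or_ne ‖π i‖ 0 with hi | hi
  · simp [hi] -- `x / 0 = 0`: both sides vanish
  · field_simp

theorem norm_relaxedStep_lt (hπ : Pairwise fun i j => ⟪π i, π j⟫ = 0)
    (hl : ∀ i, l i ∈ Set.Ioo (0 : ℝ) 2) {u : E} (hu : ∃ i, ⟪π i, u⟫ ≠ 0) :
    ‖relaxedStep π l u‖ < ‖u‖ := by
  obtain ⟨i₀, hi₀⟩ := hu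
  have hl' : ∀ i, 0 < l i * (2 - l i) := fun i => mul_pos (hl i).1 (sub_pos.mpr (hl i).2)
  have hπi₀ : π i₀ ≠ 0 := fun h => hi₀ (by simp [h])
  have hpos : 0 < ∑ i, l i * (2 - l i) * ⟪π i, u⟫ ^ 2 / ‖π i‖ ^ 2 :=
    sum_pos' (fun i _ => by have := hl' i; positivity)
      ⟨i₀, mem_univ i₀, by have := hl' i₀; positivity⟩
  refine lt_of_pow_lt_pow_left₀ 2 (norm_nonneg u) ?_
  rw [norm_relaxedStep_sq hπ]
  linarith

theorem orthogonalProjectionOnto_relaxedStep (K : Submodule ℝ E) [K.HasOrthogonalProjection]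
    {u : E} (hu : u ∈ K) :
    (K.orthogonalProjectionOnto (relaxedStep π l u) : E) =
      u - ∑ i, (l i * ⟪π i, u⟫ / ‖π i‖ ^ 2) • (K.orthogonalProjectionOnto (π i) : E) := by
  simp [relaxedStep, K.starProjection_eq_self_iff.mpr hu]

end RelaxedStep

theorem relaxed_pocs_strict_contraction_general
    {H : Type*} [NormedAddCommGroup H] [InnerProductSpace ℝ H]
    {Z : Type*} [Fintype Z] (K : Submodule ℝ H) [CompleteSpace K]
    (π : Z → H)
    (hortho : ∀ i j, i ≠ j → ⟪π i, π j⟫ = 0)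
    (f : Z → H) (hf : ∀ i, f i = (Submodule.orthogonalProjectionOnto K (π i) : H))
    (l : Z → ℝ) (hl : ∀ i, l i ∈ Set.Ioo (0 : ℝ) 2) :
    ∀ u ∈ Submodule.span ℝ (Set.range f), u ≠ 0 →
      ‖u - ∑ i, (l i * ⟪π i, u⟫ / ‖π i‖ ^ 2) • f i‖ < ‖u‖ := by
  intro u hu hu0
  have huK : u ∈ K :=
    Submodule.span_le.mpr (Set.range_subset_iff.mpr fun i => hf i ▸ Submodule.coe_mem _) hu
  obtain ⟨i, hi⟩ := exists_inner_ne_zero_of_mem_span hu hu0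
  rw [hf, ← K.starProjection_apply, K.inner_starProjection_left_eq_right,
    K.starProjection_eq_self_iff.mpr huK] at hi
  simp only [hf]
  rw [← orthogonalProjectionOnto_relaxedStep K huK]
  exact (K.norm_orthogonalProjectionOnto_apply_le _).trans_lt
    (norm_relaxedStep_lt hortho hl ⟨i, hi⟩)

/-- Strict contraction on `V_f`: with `f i = P_K (π i)` for an orthogonal family `(π i)` of
nonzero vectors, and `M^λ u = u − ∑ i λ i ⟪π i, u⟫ f i / ‖π i‖²` with `λ i ∈ (0,2)`,
one has `‖M^λ u‖ < ‖u‖` for every nonzero `u` in the span `V_f` of the `f i`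
(finite index set `Z`). -/
theorem relaxed_pocs_strict_contraction
    {H : Type*} [NormedAddCommGroup H] [InnerProductSpace ℝ H] [CompleteSpace H]
    {Z : Type*} [Fintype Z] (K : Submodule ℝ H) [CompleteSpace K]
    (π : Z → H) (hπ0 : ∀ i, π i ≠ 0)
    (hortho : ∀ i j, i ≠ j → ⟪π i, π j⟫ = 0)
    (f : Z → H) (hf : ∀ i, f i = (Submodule.orthogonalProjectionOnto K (π i) : H))
    (l : Z → ℝ) (hl : ∀ i, l i ∈ Set.Ioo (0 : ℝ) 2) :
    ∀ u ∈ Submodule.span ℝ (Set.range f), u ≠ 0 →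
      ‖u - ∑ i, (l i * ⟪π i, u⟫ / ‖π i‖ ^ 2) • f i‖ < ‖u‖ :=
  relaxed_pocs_strict_contraction_general K π hortho f hf l hl
end

section
/- Inner-product formula via a repeated integral: with f_i = φ * 1_{[t_{i−1}, t_i)} for a given integrable even-autocorrelation kernel, one has ⟨f_i, f_j⟩ = h(t_i − t_{j−1}) − h(t_{i−1} − t_{j−1}) − h(t_i − t_j) + h(t_{i−1} − t_j), where h(t) = ∫₀ᵗ (t − τ) a_φ(τ) dτ and a_φ(t) = (φ * φ(−·))(t). -/
/-!
Writing `f_i t = ∫_{t_{i-1}}^{t_i} φ (t - s) ds`, the inner product becomes a triple integral of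
`φ (t - s) φ (t - u)`. It is absolutely integrable because `∫ |φ (t - s) φ (t - u)| dt ≤ ‖φ‖₂²`
uniformly in `s, u` (AM-GM), so Fubini turns it into `∫_{I_i} ∫_{I_j} a_φ (s - u) du ds`.
Integrating a difference kernel twice over a rectangle gives the four corner values of a second
primitive of `a_φ`, which Cauchy's formula for repeated integration identifies with `h`; that
formula is an integration by parts against the absolutely continuous primitive of the bounded,
hence locally integrable, function `a_φ`.
-/

open MeasureTheory intervalIntegral

noncomputable def autocorrelation (φ : ℝ → ℝ) (t : ℝ) : ℝ := ∫ s, φ s * φ (s - t)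

theorem MeasureTheory.MemLp.comp_sub_right {E : Type*} [NormedAddCommGroup E] {f : ℝ → E}
    {p : ENNReal} (hf : MemLp f p) (s : ℝ) : MemLp (fun t => f (t - s)) p :=
  hf.comp_measurePreserving (measurePreserving_sub_right volume s)

theorem MeasureTheory.Measure.QuasiMeasurePreserving.fst_sub_comp_snd {α : Type*}
    [MeasurableSpace α] {ρ : Measure α} [SFinite ρ] {f : α → ℝ}
    (hf : Measure.QuasiMeasurePreserving f ρ volume) :
    Measure.QuasiMeasurePreserving (fun q : ℝ × α => q.1 - f q.2) (volume.prod ρ) volume :=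
  (quasiMeasurePreserving_sub volume volume).comp
    (QuasiMeasurePreserving.prodMap (Measure.QuasiMeasurePreserving.id _) hf)

section Autocorrelation

variable {φ : ℝ → ℝ}

theorem integral_comp_sub_mul_comp_sub (s u : ℝ) :
    ∫ t, φ (t - s) * φ (t - u) = autocorrelation φ (s - u) := by
  calc ∫ t, φ (t - s) * φ (t - u) = ∫ t, φ (t - u) * φ (t - u - (s - u)) := by
        congr 1; ext t; rw [mul_comm, sub_sub_sub_cancel_right]
    _ = autocorrelation φ (s - u) :=
        integral_sub_right_eq_self (fun r => φ r * φ (r - (s - u))) u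

theorem integrable_comp_sub_mul_comp_sub (hφ : MemLp φ 2) (s u : ℝ) :
    Integrable (fun t => φ (t - s) * φ (t - u)) :=
  (hφ.comp_sub_right s).integrable_mul (hφ.comp_sub_right u)

theorem integral_norm_comp_sub_mul_comp_sub_le (hφ : MemLp φ 2) (s u : ℝ) :
    ∫ t, ‖φ (t - s) * φ (t - u)‖ ≤ ∫ t, φ t ^ 2 := by
  have hsq (c : ℝ) : Integrable (fun t => φ (t - c) ^ 2) := (hφ.comp_sub_right c).integrable_sq
  calc ∫ t, ‖φ (t - s) * φ (t - u)‖ ≤ ∫ t, (φ (t - s) ^ 2 + φ (t - u) ^ 2) / 2 := by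
        refine integral_mono (integrable_comp_sub_mul_comp_sub hφ s u).norm
          (((hsq s).add (hsq u)).div_const 2) fun t => ?_
        rw [norm_mul, Real.norm_eq_abs, Real.norm_eq_abs, le_div_iff₀ two_pos,
          ← sq_abs (φ (t - s)), ← sq_abs (φ (t - u))]
        linarith [two_mul_le_add_sq |φ (t - s)| |φ (t - u)|]
    _ = ∫ t, φ t ^ 2 := by
        rw [MeasureTheory.integral_div, integral_add (hsq s) (hsq u),
          integral_sub_right_eq_self (fun t => φ t ^ 2),
          integral_sub_right_eq_self (fun t => φ t ^ 2)]
        ring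

theorem abs_autocorrelation_le (hφ : MemLp φ 2) (t : ℝ) :
    |autocorrelation φ t| ≤ ∫ s, φ s ^ 2 := by
  calc |autocorrelation φ t| ≤ ∫ s, ‖φ (s - 0) * φ (s - t)‖ := by
        simpa [autocorrelation] using
          MeasureTheory.abs_integral_le_integral_abs (f := fun s => φ s * φ (s - t))
    _ ≤ ∫ s, φ s ^ 2 := integral_norm_comp_sub_mul_comp_sub_le hφ 0 t

theorem aestronglyMeasurable_autocorrelation (hφ : AEStronglyMeasurable φ) :
    AEStronglyMeasurable (autocorrelation φ) := by
  have hsub : Measure.QuasiMeasurePreserving (fun p : ℝ × ℝ => p.2 - p.1)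
      (volume.prod volume) volume :=
    (quasiMeasurePreserving_sub volume volume).comp
      Measure.measurePreserving_swap.quasiMeasurePreserving
  exact ((hφ.comp_quasiMeasurePreserving Measure.quasiMeasurePreserving_snd).mul
    (hφ.comp_quasiMeasurePreserving hsub)).integral_prod_right'

theorem locallyIntegrable_autocorrelation (hφ : MemLp φ 2) :
    LocallyIntegrable (autocorrelation φ) :=
  (locallyIntegrable_const (∫ s, φ s ^ 2)).mono (aestronglyMeasurable_autocorrelation hφ.1) <|
    .of_forall fun t => (abs_autocorrelation_le hφ t).trans (le_abs_self _)

theorem integrable_comp_sub_mul_comp_sub_prod {μ ν : Measure ℝ} [IsFiniteMeasure μ]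
    [IsFiniteMeasure ν] (hμ : μ ≪ volume) (hν : ν ≪ volume) (hφ : MemLp φ 2) :
    Integrable (fun q : ℝ × ℝ × ℝ => φ (q.1 - q.2.1) * φ (q.1 - q.2.2))
      (volume.prod (μ.prod ν)) := by
  have hm : AEStronglyMeasurable (fun q : ℝ × ℝ × ℝ => φ (q.1 - q.2.1) * φ (q.1 - q.2.2))
      (volume.prod (μ.prod ν)) :=
    (hφ.1.comp_quasiMeasurePreserving
      (Measure.quasiMeasurePreserving_fst.mono_right hμ).fst_sub_comp_snd).mul
    (hφ.1.comp_quasiMeasurePreserving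
      (Measure.quasiMeasurePreserving_snd.mono_right hν).fst_sub_comp_snd)
  refine (integrable_prod_iff' hm).2
    ⟨.of_forall fun p => integrable_comp_sub_mul_comp_sub hφ p.1 p.2, ?_⟩
  refine (integrable_const (∫ t, φ t ^ 2)).mono' hm.prod_swap.norm.integral_prod_right' <|
    .of_forall fun p => ?_
  rw [Real.norm_of_nonneg (integral_nonneg fun _ => norm_nonneg _)]
  exact integral_norm_comp_sub_mul_comp_sub_le hφ p.1 p.2

theorem integral_mul_integral_comp_sub {μ ν : Measure ℝ} [IsFiniteMeasure μ]
    [IsFiniteMeasure ν] (hμ : μ ≪ volume) (hν : ν ≪ volume) (hφ : MemLp φ 2) :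
    ∫ t, (∫ s, φ (t - s) ∂μ) * (∫ u, φ (t - u) ∂ν) =
      ∫ s, ∫ u, autocorrelation φ (s - u) ∂ν ∂μ := by
  have hF := integrable_comp_sub_mul_comp_sub_prod hμ hν hφ
  have hA : Integrable (fun p : ℝ × ℝ => autocorrelation φ (p.1 - p.2)) (μ.prod ν) := by
    simpa only [integral_comp_sub_mul_comp_sub] using hF.integral_prod_right
  calc ∫ t, (∫ s, φ (t - s) ∂μ) * (∫ u, φ (t - u) ∂ν)
      = ∫ t, ∫ p : ℝ × ℝ, φ (t - p.1) * φ (t - p.2) ∂(μ.prod ν) := by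
        simp only [← integral_prod_mul]
    _ = ∫ p : ℝ × ℝ, (∫ t, φ (t - p.1) * φ (t - p.2)) ∂(μ.prod ν) :=
        integral_integral_swap hF
    _ = ∫ p : ℝ × ℝ, autocorrelation φ (p.1 - p.2) ∂(μ.prod ν) := by
        simp only [integral_comp_sub_mul_comp_sub]
    _ = ∫ s, ∫ u, autocorrelation φ (s - u) ∂ν ∂μ := integral_prod _ hA

theorem integral_mul_intervalIntegral_comp_sub (hφ : MemLp φ 2) (a b c d : ℝ) :
    ∫ t, (∫ s in a..b, φ (t - s)) * (∫ u in c..d, φ (t - u)) =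
      ∫ s in a..b, ∫ u in c..d, autocorrelation φ (s - u) := by
  have hfin (x y : ℝ) : IsFiniteMeasure (volume.restrict (Set.uIoc x y)) :=
    isFiniteMeasure_restrict.2 (by simp [Real.volume_uIoc])
  simp only [intervalIntegral_eq_integral_uIoc, smul_eq_mul, mul_mul_mul_comm _ (∫ s in _, _) _,
    MeasureTheory.integral_const_mul]
  rw [← integral_mul_integral_comp_sub Measure.restrict_le_self.absolutelyContinuous
    Measure.restrict_le_self.absolutelyContinuous hφ]
  ring

end Autocorrelation

theorem integral_integral_eq_integral_sub_mul {g : ℝ → ℝ} {z : ℝ}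
    (hg : IntervalIntegrable g volume 0 z) :
    ∫ y in (0 : ℝ)..z, ∫ x in (0 : ℝ)..y, g x = ∫ τ in (0 : ℝ)..z, (z - τ) * g τ := by
  set G : ℝ → ℝ := fun y => ∫ x in (0 : ℝ)..y, g x
  have hG : AbsolutelyContinuousOnInterval G 0 z :=
    hg.absolutelyContinuousOnInterval_intervalIntegral (by simp)
  have hlin : AbsolutelyContinuousOnInterval (fun τ => z - τ) 0 z :=
    (contDiff_const.sub contDiff_id).contDiffOn.absolutelyContinuousOnInterval
  have hderiv : ∀ᵐ τ, τ ∈ Set.uIoc 0 z → (z - τ) * deriv G τ = (z - τ) * g τ := by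
    filter_upwards [hg.ae_hasDerivAt_integral] with τ hτ hτ'
    rw [(hτ (Set.uIoc_subset_uIcc hτ') 0 Set.left_mem_uIcc).deriv]
  rw [← integral_congr_ae hderiv, hlin.integral_mul_deriv_eq_deriv_mul hG]
  simp [G]

theorem intervalIntegral_intervalIntegral_comp_sub {g H : ℝ → ℝ}
    (hg : LocallyIntegrable g volume) (hH : ∀ z, H z = ∫ τ in (0 : ℝ)..z, (z - τ) * g τ)
    (a b c d : ℝ) :
    ∫ s in a..b, ∫ u in c..d, g (s - u) = H (b - c) - H (a - c) - H (b - d) + H (a - d) := by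
  have hg' : ∀ x y, IntervalIntegrable g volume x y := fun x y =>
    (hg.integrableOn_isCompact isCompact_uIcc).intervalIntegrable
  set G : ℝ → ℝ := fun y => ∫ x in (0 : ℝ)..y, g x
  have hG : Continuous G := continuous_primitive hg' 0
  have inner (s : ℝ) : ∫ u in c..d, g (s - u) = G (s - c) - G (s - d) := by
    rw [integral_comp_sub_left, integral_interval_sub_left (hg' _ _) (hg' _ _)]
  have outer (e : ℝ) : ∫ s in a..b, G (s - e) = H (b - e) - H (a - e) := by
    rw [integral_comp_sub_right, hH, hH, ← integral_integral_eq_integral_sub_mul (hg' _ _),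
      ← integral_integral_eq_integral_sub_mul (hg' _ _)]
    exact (integral_interval_sub_left (hG.intervalIntegrable _ _)
      (hG.intervalIntegrable _ _)).symm
  have hGe (e : ℝ) : IntervalIntegrable (fun s => G (s - e)) volume a b :=
    (hG.comp (continuous_id.sub continuous_const)).intervalIntegrable _ _
  simp only [inner]
  rw [integral_sub (hGe c) (hGe d), outer, outer]
  ring

theorem inner_product_by_repeated_integral_general
    (φ : ℝ → ℝ) (hφ2 : MemLp φ 2 (volume : Measure ℝ))
    (ti1 ti tj1 tj : ℝ)
    (aφ : ℝ → ℝ) (haφ : ∀ t, aφ t = ∫ s, φ s * φ (s - t))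
    (fi fj : ℝ → ℝ)
    (hfi : ∀ t, fi t = ∫ s in ti1..ti, φ (t - s))
    (hfj : ∀ t, fj t = ∫ s in tj1..tj, φ (t - s))
    (h : ℝ → ℝ) (hh : ∀ t, h t = ∫ τ in (0 : ℝ)..t, (t - τ) * aφ τ) :
    ∫ t, fi t * fj t
      = h (ti - tj1) - h (ti1 - tj1) - h (ti - tj) + h (ti1 - tj) := by
  obtain rfl : aφ = autocorrelation φ := funext haφ
  simp only [hfi, hfj]
  rw [integral_mul_intervalIntegral_comp_sub hφ2]
  exact intervalIntegral_intervalIntegral_comp_sub (locallyIntegrable_autocorrelation hφ2) hh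
    _ _ _ _

/-- Inner-product formula via a repeated integral: with `f_i = φ * 1_{[t_{i−1}, t_i)}` and
`f_j = φ * 1_{[t_{j−1}, t_j)}` for an integrable kernel `φ ∈ L¹ ∩ L²` with autocorrelation
`a_φ(t) = ∫ φ(s) φ(s−t) ds`, one has
`⟨f_i, f_j⟩ = h(t_i − t_{j−1}) − h(t_{i−1} − t_{j−1}) − h(t_i − t_j) + h(t_{i−1} − t_j)`
where `h(t) = ∫₀ᵗ (t − τ) a_φ(τ) dτ`. -/
theorem inner_product_by_repeated_integral
    (φ : ℝ → ℝ) (hφ1 : Integrable φ) (hφ2 : MemLp φ 2 (volume : Measure ℝ))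
    (ti1 ti tj1 tj : ℝ) (hi : ti1 < ti) (hj : tj1 < tj)
    (aφ : ℝ → ℝ) (haφ : ∀ t, aφ t = ∫ s, φ s * φ (s - t))
    (fi fj : ℝ → ℝ)
    (hfi : ∀ t, fi t = ∫ s in ti1..ti, φ (t - s))
    (hfj : ∀ t, fj t = ∫ s in tj1..tj, φ (t - s))
    (h : ℝ → ℝ) (hh : ∀ t, h t = ∫ τ in (0 : ℝ)..t, (t - τ) * aφ τ) :
    ∫ t, fi t * fj t
      = h (ti - tj1) - h (ti1 - tj1) - h (ti - tj) + h (ti1 - tj) :=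
  inner_product_by_repeated_integral_general φ hφ2 ti1 ti tj1 tj aφ haφ fi fj hfi hfj h hh
end

section
/- Asymptotics of h for the sinc kernel: if φ(t) = sinc(t) = sin(πt)/(πt) (so a_φ = φ), then h(t) := ∫₀ᵗ (t−τ) φ(τ) dτ satisfies h(t) = t/2 − 1/π² + O(1/t) as t → ∞. -/
open MeasureTheory intervalIntegral Filter

/-- The normalized sinc function `sin(πt)/(πt)`. -/
noncomputable def sinc (t : ℝ) : ℝ :=
  if t = 0 then 1 else Real.sin (Real.pi * t) / (Real.pi * t)

/-!
Since `τ · sinc τ = sin (πτ) / π`, we have `h t = t ∫₀ᵗ sinc - (1 - cos (πt)) / π²`, so everything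
reduces to the Dirichlet integral with a second-order remainder. Writing
`sin x / x = ∫₀^∞ sin x · e^{-xs} ds` and swapping the two integrals gives the exact formula
`∫₀ᵀ sin x / x dx = π/2 - cos T / T - R T` with
`R T = ∫₀^∞ e^{-Ts} s (sin T - s cos T) / (1 + s²) ds`, and `|R T| ≤ 2 ∫₀^∞ s e^{-Ts} ds = 2 / T²`.
At `T = πt` the oscillating terms `cos (πt) / π²` cancel, leaving
`h t - (t/2 - 1/π²) = -(t/π) R (πt) = O(1/t)`.
-/

open Set
open scoped Real

section LaplaceMoments

variable {T : ℝ}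

theorem integrableOn_pow_mul_exp_neg_mul_Ioi (k : ℕ) (hT : 0 < T) :
    IntegrableOn (fun s : ℝ => s ^ k * Real.exp (-(T * s))) (Ioi 0) := by
  refine (integrableOn_rpow_mul_exp_neg_mul_rpow (s := k) (p := 1)
    (neg_one_lt_zero.trans_le k.cast_nonneg)
    one_pos hT).congr_fun (fun s _ => ?_) measurableSet_Ioi
  simp [Real.rpow_natCast]

theorem integral_pow_mul_exp_neg_mul_Ioi (k : ℕ) (hT : 0 < T) :
    ∫ s in Ioi 0, s ^ k * Real.exp (-(T * s)) = k.factorial / T ^ (k + 1) := by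
  have h := Real.integral_rpow_mul_exp_neg_mul_Ioi (a := k + 1) (by positivity) hT
  rw [add_sub_cancel_right, Real.Gamma_nat_eq_factorial, ← Nat.cast_succ] at h
  simp_rw [Real.rpow_natCast] at h
  rw [h, one_div_pow, one_div_mul_eq_div]

theorem integral_exp_neg_mul_Ioi (hT : 0 < T) :
    ∫ s in Ioi 0, Real.exp (-(T * s)) = 1 / T := by
  simpa using integral_pow_mul_exp_neg_mul_Ioi 0 hT

theorem integrableOn_exp_neg_mul_Ioi (hT : 0 < T) :
    IntegrableOn (fun s : ℝ => Real.exp (-(T * s))) (Ioi 0) := by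
  simpa using integrableOn_pow_mul_exp_neg_mul_Ioi 0 hT

theorem integrableOn_mul_exp_neg_mul_Ioi (hT : 0 < T) :
    IntegrableOn (fun s : ℝ => s * Real.exp (-(T * s))) (Ioi 0) := by
  simpa using integrableOn_pow_mul_exp_neg_mul_Ioi 1 hT

end LaplaceMoments

section Dirichlet

theorem integral_sin_mul_exp_neg_mul (s T : ℝ) :
    ∫ x in (0 : ℝ)..T, Real.sin x * Real.exp (-(x * s))
      = (1 - Real.exp (-(T * s)) * (Real.cos T + s * Real.sin T)) / (1 + s ^ 2) := by
  have hs : (1 : ℝ) + s ^ 2 ≠ 0 := by positivity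
  have hderiv : ∀ x : ℝ, HasDerivAt
      (fun x => -(Real.exp (-(x * s)) * (Real.cos x + s * Real.sin x)) / (1 + s ^ 2))
      (Real.sin x * Real.exp (-(x * s))) x := by
    intro x
    have hexp : HasDerivAt (fun x : ℝ => Real.exp (-(x * s))) (-s * Real.exp (-(x * s))) x := by
      simpa [mul_comm] using (((hasDerivAt_id x).mul_const s).fun_neg).exp
    have htrig := (Real.hasDerivAt_cos x).fun_add ((Real.hasDerivAt_sin x).const_mul s)
    refine (((hexp.fun_mul htrig).fun_neg).div_const (1 + s ^ 2)).congr_deriv ?_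
    field_simp
    ring
  rw [integral_eq_sub_of_hasDerivAt (fun x _ => hderiv x)
    (Continuous.intervalIntegrable (by fun_prop) 0 T)]
  simp only [zero_mul, neg_zero, Real.exp_zero, Real.cos_zero, Real.sin_zero]
  ring

variable {T : ℝ}

theorem Real.sinc_eq_integral_sin_mul_exp_neg_mul {x : ℝ} (hx : 0 < x) :
    Real.sinc x = ∫ s in Ioi 0, Real.sin x * Real.exp (-(x * s)) := by
  rw [MeasureTheory.integral_const_mul, integral_exp_neg_mul_Ioi hx, Real.sinc_of_ne_zero hx.ne',
    mul_one_div]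

theorem integrable_uncurry_sin_mul_exp_neg_mul :
    Integrable (Function.uncurry fun x s : ℝ => Real.sin x * Real.exp (-(x * s)))
      ((volume.restrict (Ioc 0 T)).prod (volume.restrict (Ioi 0))) := by
  have hmeas : AEStronglyMeasurable
      (Function.uncurry fun x s : ℝ => Real.sin x * Real.exp (-(x * s)))
      ((volume.restrict (Ioc 0 T)).prod (volume.restrict (Ioi 0))) :=
    Continuous.aestronglyMeasurable (by fun_prop)
  refine (integrable_prod_iff hmeas).2 ⟨?_, ?_⟩
  · filter_upwards [ae_restrict_mem measurableSet_Ioc] with x hx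
    exact (integrableOn_exp_neg_mul_Ioi hx.1).const_mul (Real.sin x)
  · refine Integrable.mono' (integrable_const 1) hmeas.norm.integral_prod_right' ?_
    filter_upwards [ae_restrict_mem measurableSet_Ioc] with x hx
    have hnorm : ∫ s in Ioi 0, ‖Real.sin x * Real.exp (-(x * s))‖ = |Real.sinc x| := by
      simp_rw [Real.norm_eq_abs, abs_mul, Real.abs_exp]
      rw [MeasureTheory.integral_const_mul, integral_exp_neg_mul_Ioi hx.1,
        Real.sinc_of_ne_zero hx.1.ne', abs_div, abs_of_pos hx.1, mul_one_div]
    simp only [Function.uncurry_apply_pair]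
    rw [hnorm, Real.norm_eq_abs, abs_abs]
    exact Real.abs_sinc_le_one x

noncomputable def dirichletRemainder (T : ℝ) : ℝ :=
  ∫ s in Ioi 0, Real.exp (-(T * s)) * s * (Real.sin T - s * Real.cos T) / (1 + s ^ 2)

theorem norm_dirichletRemainder_integrand_le {s : ℝ} (hs : 0 ≤ s) :
    ‖Real.exp (-(T * s)) * s * (Real.sin T - s * Real.cos T) / (1 + s ^ 2)‖
      ≤ 2 * (s * Real.exp (-(T * s))) := by
  have htrig : |Real.sin T - s * Real.cos T| ≤ 1 + s := by
    calc |Real.sin T - s * Real.cos T| ≤ |Real.sin T| + s * |Real.cos T| := by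
          rw [← abs_of_nonneg hs, ← abs_mul, abs_of_nonneg hs]; exact abs_sub _ _
      _ ≤ 1 + s * 1 := by
          gcongr
          exacts [Real.abs_sin_le_one T, Real.abs_cos_le_one T]
      _ = 1 + s := by ring
  rw [Real.norm_eq_abs, abs_div, abs_mul, abs_mul, Real.abs_exp, abs_of_nonneg hs,
    abs_of_pos (by positivity : (0 : ℝ) < 1 + s ^ 2), div_le_iff₀ (by positivity)]
  calc Real.exp (-(T * s)) * s * |Real.sin T - s * Real.cos T|
      ≤ Real.exp (-(T * s)) * s * (1 + s) := by gcongr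
    _ ≤ 2 * (s * Real.exp (-(T * s))) * (1 + s ^ 2) := by
        have : 0 ≤ Real.exp (-(T * s)) * s := by positivity
        nlinarith [mul_nonneg this (sq_nonneg (s - 1 / 2))]

theorem integrableOn_dirichletRemainder_integrand (hT : 0 < T) :
    IntegrableOn (fun s => Real.exp (-(T * s)) * s * (Real.sin T - s * Real.cos T) / (1 + s ^ 2))
      (Ioi 0) := by
  refine Integrable.mono' ((integrableOn_mul_exp_neg_mul_Ioi hT).const_mul 2)
    (Continuous.aestronglyMeasurable
      (Continuous.div (by fun_prop) (by fun_prop) fun s => by positivity)) ?_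
  filter_upwards [ae_restrict_mem measurableSet_Ioi] with s hs
  exact norm_dirichletRemainder_integrand_le (le_of_lt hs)

theorem abs_dirichletRemainder_le (hT : 0 < T) : |dirichletRemainder T| ≤ 2 / T ^ 2 := by
  have hmoment : ∫ s in Ioi 0, s * Real.exp (-(T * s)) = 1 / T ^ 2 := by
    simpa using integral_pow_mul_exp_neg_mul_Ioi 1 hT
  calc |dirichletRemainder T| ≤ ∫ s in Ioi 0, 2 * (s * Real.exp (-(T * s))) :=
        norm_integral_le_of_norm_le ((integrableOn_mul_exp_neg_mul_Ioi hT).const_mul 2)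
          ((ae_restrict_mem measurableSet_Ioi).mono fun s hs =>
            norm_dirichletRemainder_integrand_le (le_of_lt hs))
    _ = 2 / T ^ 2 := by rw [MeasureTheory.integral_const_mul, hmoment, mul_one_div]

theorem Real.integral_sinc_eq_pi_div_two_sub (hT : 0 < T) :
    ∫ x in (0 : ℝ)..T, Real.sinc x = π / 2 - Real.cos T / T - dirichletRemainder T := by
  have hlaplace : ∀ s, ∫ x in Ioc 0 T, Real.sin x * Real.exp (-(x * s))
      = (1 + s ^ 2)⁻¹ - Real.cos T * Real.exp (-(T * s))
        - Real.exp (-(T * s)) * s * (Real.sin T - s * Real.cos T) / (1 + s ^ 2) := by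
    intro s
    rw [← integral_of_le hT.le, integral_sin_mul_exp_neg_mul]
    field_simp
    ring
  have hexp := (integrableOn_exp_neg_mul_Ioi hT).const_mul (Real.cos T)
  rw [integral_of_le hT.le,
    setIntegral_congr_fun measurableSet_Ioc fun x hx =>
      Real.sinc_eq_integral_sin_mul_exp_neg_mul hx.1,
    integral_integral_swap integrable_uncurry_sin_mul_exp_neg_mul, funext hlaplace,
    integral_sub ?_ (integrableOn_dirichletRemainder_integrand hT),
    integral_sub integrable_inv_one_add_sq.integrableOn hexp, MeasureTheory.integral_const_mul,
    integral_exp_neg_mul_Ioi hT, integral_Ioi_inv_one_add_sq, Real.arctan_zero, sub_zero,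
    mul_one_div, dirichletRemainder]
  exact integrable_inv_one_add_sq.integrableOn.sub hexp

end Dirichlet

section NormalizedSinc

theorem sinc_eq_real_sinc (t : ℝ) : sinc t = Real.sinc (π * t) := by
  by_cases ht : t = 0
  · simp [sinc, ht]
  · simp [sinc, Real.sinc, ht, Real.pi_ne_zero]

theorem continuous_sinc : Continuous sinc := by
  rw [show sinc = fun t => Real.sinc (π * t) from funext sinc_eq_real_sinc]
  exact Real.continuous_sinc.comp (continuous_const_mul π)

theorem mul_sinc (t : ℝ) : t * sinc t = Real.sin (π * t) / π := by
  by_cases ht : t = 0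
  · simp [sinc, ht]
  · rw [sinc, if_neg ht]
    field_simp

theorem integral_sinc_eq_one_half_sub {t : ℝ} (ht : 0 < t) :
    ∫ τ in (0 : ℝ)..t, sinc τ
      = 1 / 2 - Real.cos (π * t) / (π ^ 2 * t) - dirichletRemainder (π * t) / π := by
  simp_rw [sinc_eq_real_sinc]
  rw [integral_comp_mul_left (fun x => Real.sinc x) Real.pi_ne_zero, mul_zero,
    Real.integral_sinc_eq_pi_div_two_sub (by positivity), smul_eq_mul]
  field_simp

theorem integral_sub_mul_sinc (t : ℝ) :
    ∫ τ in (0 : ℝ)..t, (t - τ) * sinc τ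
      = t * (∫ τ in (0 : ℝ)..t, sinc τ) - (1 - Real.cos (π * t)) / π ^ 2 := by
  have hsin : ∫ τ in (0 : ℝ)..t, τ * sinc τ = (1 - Real.cos (π * t)) / π ^ 2 := by
    simp_rw [mul_sinc]
    rw [intervalIntegral.integral_div, integral_comp_mul_left Real.sin Real.pi_ne_zero, mul_zero,
      integral_sin, Real.cos_zero, smul_eq_mul]
    field_simp
  simp_rw [sub_mul]
  rw [integral_sub ((continuous_sinc.intervalIntegrable 0 t).const_mul t) ?_,
    intervalIntegral.integral_const_mul, hsin]
  exact (continuous_id.mul continuous_sinc).intervalIntegrable 0 t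

theorem integral_sub_mul_sinc_of_pos {t : ℝ} (ht : 0 < t) :
    ∫ τ in (0 : ℝ)..t, (t - τ) * sinc τ
      = t / 2 - 1 / π ^ 2 - t / π * dirichletRemainder (π * t) := by
  rw [integral_sub_mul_sinc, integral_sinc_eq_one_half_sub ht]
  field_simp
  ring

end NormalizedSinc

/-- Asymptotics of `h` for the sinc kernel: `h(t) = ∫₀ᵗ (t−τ) sinc(τ) dτ` satisfies
`h(t) = t/2 − 1/π² + O(1/t)` as `t → ∞`. -/
theorem sinc_repeated_integral_asymptotics
    (h : ℝ → ℝ) (hh : ∀ t, h t = ∫ τ in (0 : ℝ)..t, (t - τ) * sinc τ) :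
    (fun t : ℝ => h t - (t / 2 - 1 / Real.pi ^ 2)) =O[atTop] (fun t : ℝ => 1 / t) := by
  refine Asymptotics.IsBigO.of_bound (2 / π ^ 3) ?_
  filter_upwards [eventually_gt_atTop 0] with t ht
  have hR := abs_dirichletRemainder_le (mul_pos Real.pi_pos ht)
  rw [hh, integral_sub_mul_sinc_of_pos ht, sub_sub_cancel_left, norm_neg, norm_mul,
    Real.norm_of_nonneg (by positivity : 0 ≤ t / π), Real.norm_eq_abs,
    Real.norm_of_nonneg (one_div_pos.2 ht).le]
  calc t / π * |dirichletRemainder (π * t)| ≤ t / π * (2 / (π * t) ^ 2) := by gcongr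
    _ = 2 / π ^ 3 * (1 / t) := by field_simp
end
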